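/- The improper integral ∫₀^∞ -log(1 - e^{-z}) dz equals π²/6. -/

import Mathlib

/-!
Expanding `-log (1 - e^{-z}) = ∑_{n ≥ 1} e^{-n z} / n` and integrating term by term (the terms are
nonnegative with integrals `1 / n²`) turns the integral into `∑_{n ≥ 1} 1 / n² = π² / 6`.
-/

open MeasureTheory Real Set

lemma hasSum_exp_neg_mul_div_neg_log_one_sub_exp_neg {x : ℝ} (hx : 0 < x) :
    HasSum (fun n : ℕ => exp (-(n + 1) * x) / (n + 1)) (-log (1 - exp (-x))) := by
  have hx' : |exp (-x)| < 1 := by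
    rw [abs_of_pos (exp_pos _), exp_lt_one_iff]
    linarith
  convert hasSum_pow_div_log_of_abs_lt_one hx' using 2 with n
  rw [← exp_nat_mul]
  push_cast
  ring_nf

lemma integral_exp_neg_mul_div_Ioi_zero {c : ℝ} (hc : 0 < c) :
    ∫ x in Ioi (0 : ℝ), exp (-c * x) / c = 1 / c ^ 2 := by
  rw [integral_div, integral_exp_mul_Ioi (neg_neg_of_pos hc), mul_zero, exp_zero]
  field_simp

lemma hasSum_one_div_nat_add_one_sq :
    HasSum (fun n : ℕ => 1 / ((n : ℝ) + 1) ^ 2) (π ^ 2 / 6) := by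
  simpa using (hasSum_nat_add_iff' 1).mpr hasSum_zeta_two

theorem integral_f_eq_pi_sq_div_six :
    ∫ z in Set.Ioi (0 : ℝ), -Real.log (1 - Real.exp (-z)) = Real.pi ^ 2 / 6 := by
  set F : ℕ → ℝ → ℝ := fun n z => exp (-(n + 1) * z) / (n + 1)
  have hF_int : ∀ n, IntegrableOn (F n) (Ioi 0) := fun n =>
    (integrableOn_exp_mul_Ioi (neg_neg_of_pos n.cast_add_one_pos) 0).div_const _
  have hF_integral : ∀ n, ∫ z in Ioi 0, F n z = 1 / ((n : ℝ) + 1) ^ 2 := fun n =>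
    integral_exp_neg_mul_div_Ioi_zero n.cast_add_one_pos
  have hF_norm : ∀ n z, ‖F n z‖ = F n z := fun n z => norm_of_nonneg (by positivity)
  calc ∫ z in Ioi 0, -log (1 - exp (-z))
      = ∫ z in Ioi 0, ∑' n, F n z := setIntegral_congr_fun measurableSet_Ioi fun z hz =>
        (hasSum_exp_neg_mul_div_neg_log_one_sub_exp_neg hz).tsum_eq.symm
    _ = ∑' n, ∫ z in Ioi 0, F n z := by
        refine (integral_tsum_of_summable_integral_norm hF_int ?_).symm
        simpa only [hF_norm, hF_integral] using hasSum_one_div_nat_add_one_sq.summable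
    _ = π ^ 2 / 6 := by simpa only [hF_integral] using hasSum_one_div_nat_add_one_sq.tsum_eq
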